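/- arXiv:0906.0219 — 2 statements merged into one kernel-verified Lean document; each statement's English description precedes it below -/
import Mathlib

section
/- Let T : A(X,E) → A(Y,F) be a surjective linear map that preserves common zeros, where A(X,E) and A(Y,F) are almost normally multiplicative vector subspaces of C(X,E) and C(Y,F). Then there exist a dense subset Z of βY and a homeomorphism h : Z → X such that for every y ∈ Z and every f ∈ A(X,E), setting u = f(h(y)), the point y lies in the closure in βY of ι_Y({y' ∈ Y : (Tf)(y') = (T𝐮)(y')}); in particular (Tf)^β(y) = (T𝐮)^β(y). -/
open Set Filter Topology

/-- The zero set of a function. -/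
def zeroSet {α β : Type*} [Zero β] (f : α → β) : Set α := {x | f x = 0}

/-- A vector subspace `AX` of `C(X)` is almost normal if all its members are continuous and
for every pair of subsets `P`, `Q` of `X` whose closures in the Stone–Čech compactification
`βX` are disjoint, there is `f ∈ AX` with `f = 0` on `P` and `f = 1` on `Q`. -/
def AlmostNormal (X : Type*) [TopologicalSpace X] (AX : Submodule ℝ (X → ℝ)) : Prop :=
  (∀ φ ∈ AX, Continuous φ) ∧
  ∀ P Q : Set X,
    Disjoint (closure (stoneCechUnit '' P)) (closure (stoneCechUnit '' Q)) →
      ∃ φ ∈ AX, (∀ x ∈ P, φ x = 0) ∧ (∀ x ∈ Q, φ x = 1)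

/-- A vector subspace `AXE` of `C(X,E)` is almost normally multiplicative if all its members
are continuous, it contains the constant functions, and there is an almost normal subspace
`AX` of `C(X)` such that `φ • f ∈ AXE` whenever `φ ∈ AX` and `f ∈ AXE`. -/
def AlmostNormallyMultiplicative (X E : Type*) [TopologicalSpace X] [TopologicalSpace E]
    [AddCommGroup E] [Module ℝ E] (AXE : Submodule ℝ (X → E)) : Prop :=
  (∀ f ∈ AXE, Continuous f) ∧
  (∀ u : E, (fun _ : X => u) ∈ AXE) ∧
  ∃ AX : Submodule ℝ (X → ℝ), AlmostNormal X AX ∧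
    ∀ φ ∈ AX, ∀ f ∈ AXE, (fun x => φ x • f x) ∈ AXE

/-- A map `T` between subspaces of `C(X,E)` and `C(Y,F)` preserves common zeros if for every
`k ∈ ℕ` and every finite family `f₁, …, f_k`, the zero sets of the `fᵢ` have a common point
iff the zero sets of the `T fᵢ` do. -/
def PreservesCommonZeros {X Y E F : Type*} [TopologicalSpace X] [TopologicalSpace Y]
    [AddCommGroup E] [Module ℝ E] [AddCommGroup F] [Module ℝ F]
    {AXE : Submodule ℝ (X → E)} {AYF : Submodule ℝ (Y → F)}
    (T : AXE → AYF) : Prop :=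
  ∀ (k : ℕ) (f : Fin (k + 1) → AXE),
    (⋂ i, zeroSet ((f i : X → E))).Nonempty ↔ (⋂ i, zeroSet ((T (f i) : Y → F))).Nonempty

/-- The set `Z_x ⊆ βY`: the intersection, over all `f` in the subspace vanishing at `x`, of the
closures in `βY` of the zero sets of `T f`. -/
def Zx {X Y E F : Type*} [TopologicalSpace X] [TopologicalSpace Y]
    [AddCommGroup E] [Module ℝ E] [AddCommGroup F] [Module ℝ F]
    {AXE : Submodule ℝ (X → E)} {AYF : Submodule ℝ (Y → F)}
    (T : AXE → AYF) (x : X) : Set (StoneCech Y) :=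
  ⋂ (f : AXE) (_ : (f : X → E) x = 0), closure (stoneCechUnit '' zeroSet ((T f : Y → F)))


/-- The unique continuous extension `g^β : βY → βF` of a continuous map `g : Y → F`. -/
noncomputable def betaExt {Y F : Type*} [TopologicalSpace Y] [TopologicalSpace F]
    {g : Y → F} (hg : Continuous g) : StoneCech Y → StoneCech F :=
  stoneCechExtend (continuous_stoneCechUnit.comp hg)

/-!
For `x ∈ X`, the set `Zx T x` is nonempty by compactness of `βY`, because `T` preserves common
zeros of finite families. The heart of the proof is that `T` also preserves complete separation:
if the zero sets of `f` and `g` are separated by a continuous `τ`, the cuts of `τ` supplied by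
almost normality, transported by `T`, form a Urysohn family on `Y`, so the zero sets of `T f` and
`T g` have disjoint closures in `βY`. Hence a point `p ∈ Zx T x` lies in the closure of the zero
set of `T f` exactly when `f x = 0`. A choice `σ x ∈ Zx T x` is then continuous and pulls the
closures of zero sets back to zero sets, whose complements form a base of `X`; so `σ` is an
embedding. Its range is dense since, by surjectivity, every open set of `βY` contains the closure
of a nonempty zero set of some `T f`. The pointwise claim is the case of `f - f x`, which vanishes
at `x`.
-/

theorem isClosed_zeroSet {α β : Type*} [TopologicalSpace α] [TopologicalSpace β] [T1Space β]
    [Zero β] {g : α → β} (hg : Continuous g) : IsClosed (zeroSet g) :=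
  isClosed_singleton.preimage hg

theorem zeroSet_smul_const {α E : Type*} [AddCommGroup E] [Module ℝ E] {u : E} (hu : u ≠ 0)
    (φ : α → ℝ) : zeroSet (fun x => φ x • u) = {x | φ x = 0} := by
  ext x
  simp [zeroSet, hu]

theorem disjoint_closure_image_stoneCechUnit {X : Type*} [TopologicalSpace X] {τ : X → ℝ}
    (hτ : Continuous τ) {s t : Set X} {a b : ℝ} (hab : a < b) (hs : ∀ x ∈ s, τ x ≤ a)
    (ht : ∀ x ∈ t, b ≤ τ x) :
    Disjoint (closure (stoneCechUnit '' s)) (closure (stoneCechUnit '' t)) := by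
  have hclamp : Continuous (fun x => projIcc a b hab.le (τ x)) := continuous_projIcc.comp hτ
  have hext (x : X) : stoneCechExtend hclamp (stoneCechUnit x) = projIcc a b hab.le (τ x) :=
    congrFun (stoneCechExtend_extends hclamp) x
  have hlevel (c : Icc a b) (u : Set X) (hu : ∀ x ∈ u, projIcc a b hab.le (τ x) = c) :
      closure (stoneCechUnit '' u) ⊆ stoneCechExtend hclamp ⁻¹' {c} :=
    closure_minimal (by rintro _ ⟨x, hx, rfl⟩; simp [hext, hu x hx])
      (isClosed_singleton.preimage (continuous_stoneCechExtend hclamp))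
  refine Disjoint.mono (hlevel _ s fun x hx => projIcc_of_le_left _ (hs x hx))
    (hlevel _ t fun x hx => projIcc_of_right_le _ (ht x hx)) ?_
  exact Disjoint.preimage _ (disjoint_singleton.2 fun h => hab.ne (congrArg Subtype.val h))

theorem betaExt_eq_of_mem_closure {Y F : Type*} [TopologicalSpace Y] [TopologicalSpace F]
    {g₁ g₂ : Y → F} (hg₁ : Continuous g₁) (hg₂ : Continuous g₂) {p : StoneCech Y}
    (hp : p ∈ closure (stoneCechUnit '' {y | g₁ y = g₂ y})) :
    betaExt hg₁ p = betaExt hg₂ p := by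
  have hext {g : Y → F} (hg : Continuous g) (y : Y) :
      betaExt hg (stoneCechUnit y) = stoneCechUnit (g y) :=
    congrFun (stoneCechExtend_extends (continuous_stoneCechUnit.comp hg)) y
  refine closure_minimal ?_ (isClosed_eq (continuous_stoneCechExtend _)
    (continuous_stoneCechExtend _)) hp
  rintro _ ⟨y, hy, rfl⟩
  change betaExt hg₁ _ = betaExt hg₂ _
  rw [hext hg₁, hext hg₂]
  exact congrArg stoneCechUnit hy

theorem exists_continuous_zero_one_of_interpolating {Y ι : Type*} [TopologicalSpace Y]
    {r : ι → ι → Prop} (hr : ∀ i j, r i j → ∃ k, r i k ∧ r k j) {K V : ι → Set Y}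
    (hK : ∀ i, IsClosed (K i)) (hV : ∀ i, IsOpen (V i)) (hKV : ∀ i j, r i j → K i ⊆ V j)
    (hVK : ∀ i j, r i j → V i ⊆ K j) {i j : ι} (hij : r i j) :
    ∃ ψ : Y → ℝ, Continuous ψ ∧ (∀ y ∈ K i, ψ y = 0) ∧ ∀ y ∉ V j, ψ y = 1 := by
  let P : Set Y → Set Y → Prop := fun c u => ∃ i j, r i j ∧ c ⊆ K i ∧ V j ⊆ u
  have hP {c u : Set Y} (_ : IsClosed c) (hcu : P c u) (_ : IsOpen u) (_ : c ⊆ u) :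
      ∃ v, IsOpen v ∧ c ⊆ v ∧ closure v ⊆ u ∧ P c v ∧ P (closure v) u := by
    obtain ⟨i, j, hij, hc, hu⟩ := hcu
    obtain ⟨k, hik, hkj⟩ := hr i j hij
    obtain ⟨l, hkl, hlj⟩ := hr k j hkj
    have hcl : closure (V k) ⊆ K l := closure_minimal (hVK k l hkl) (hK l)
    exact ⟨V k, hV k, hc.trans (hKV i k hik), hcl.trans ((hKV l j hlj).trans hu),
      ⟨i, k, hik, hc, subset_rfl⟩, ⟨l, j, hlj, hcl, hu⟩⟩
  let c : Urysohns.CU P :=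
    { C := K i, U := V j, P_C_U := ⟨i, j, hij, subset_rfl, subset_rfl⟩, closed_C := hK i,
      open_U := hV j, subset := hKV i j hij, hP := hP }
  exact ⟨c.lim, c.continuous_lim, c.lim_of_mem_C, c.lim_of_notMem_U⟩

namespace AlmostNormallyMultiplicative

variable {X E : Type*} [TopologicalSpace X] [TopologicalSpace E] [AddCommGroup E] [Module ℝ E]
  [Nontrivial E] {AXE : Submodule ℝ (X → E)}

theorem exists_sublevel_subset_zeroSet_subset (hAXE : AlmostNormallyMultiplicative X E AXE)
    {τ : X → ℝ} (hτ : Continuous τ) {a b : ℝ} (hab : a < b) :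
    ∃ f ∈ AXE, {x | τ x ≤ a} ⊆ zeroSet f ∧ zeroSet f ⊆ {x | τ x < b} := by
  obtain ⟨AX, hAX, hmul⟩ := hAXE.2.2
  obtain ⟨φ, hφ, hφ0, hφ1⟩ := hAX.2 {x | τ x ≤ a} {x | b ≤ τ x}
    (disjoint_closure_image_stoneCechUnit hτ hab (fun _ h => h) fun _ h => h)
  obtain ⟨u, hu⟩ := exists_ne (0 : E)
  refine ⟨_, hmul φ hφ _ (hAXE.2.1 u), ?_⟩
  rw [zeroSet_smul_const hu]
  exact ⟨hφ0, fun x hx => show τ x < b from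
    lt_of_not_ge fun hbx => one_ne_zero ((hφ1 x hbx).symm.trans hx)⟩

theorem exists_superlevel_subset_zeroSet_subset (hAXE : AlmostNormallyMultiplicative X E AXE)
    {τ : X → ℝ} (hτ : Continuous τ) {a b : ℝ} (hab : a < b) :
    ∃ f ∈ AXE, {x | b ≤ τ x} ⊆ zeroSet f ∧ zeroSet f ⊆ {x | a < τ x} := by
  simpa only [Pi.neg_apply, neg_le_neg_iff, neg_lt_neg_iff] using
    hAXE.exists_sublevel_subset_zeroSet_subset hτ.neg (neg_lt_neg hab)

theorem exists_apply_ne_zero_subset [CompletelyRegularSpace X]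
    (hAXE : AlmostNormallyMultiplicative X E AXE) {x : X} {N : Set X} (hN : N ∈ 𝓝 x) :
    ∃ f ∈ AXE, f x ≠ 0 ∧ {x' | f x' ≠ 0} ⊆ N := by
  obtain ⟨ρ, hρ, hρx, hρN⟩ := CompletelyRegularSpace.completely_regular x _
    isOpen_interior.isClosed_compl (not_not.2 (mem_interior_iff_mem_nhds.2 hN))
  obtain ⟨f, hf, hNf, hfρ⟩ := hAXE.exists_superlevel_subset_zeroSet_subset
    (continuous_subtype_val.comp hρ) (by norm_num : (1 : ℝ) / 3 < 2 / 3)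
  refine ⟨f, hf, fun hfx => ?_, fun x' hx' => interior_subset (not_not.1 fun hx'N => ?_)⟩
  · have := hfρ hfx
    norm_num [hρx] at this
  · exact hx' (hNf (by norm_num [hρN hx'N]))

theorem exists_eq_zero_near_disjoint_closure (hAXE : AlmostNormallyMultiplicative X E AXE)
    {K₀ K₁ : Set (StoneCech X)} (hK₀ : IsClosed K₀) (hK₁ : IsClosed K₁) (hK : Disjoint K₀ K₁) :
    ∃ f ∈ AXE, ∃ V, IsOpen V ∧ K₀ ⊆ V ∧ (∀ x, stoneCechUnit x ∈ V → f x = 0) ∧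
      Disjoint (closure (stoneCechUnit '' zeroSet f)) K₁ := by
  obtain ⟨Ψ, hΨ0, hΨ1, -⟩ := exists_continuous_zero_one_of_isClosed hK₀ hK₁ hK
  obtain ⟨f, hf, hΨf, hfΨ⟩ := hAXE.exists_sublevel_subset_zeroSet_subset
    (Ψ.continuous.comp continuous_stoneCechUnit) (by norm_num : (1 : ℝ) / 3 < 2 / 3)
  have hcl : closure (stoneCechUnit '' zeroSet f) ⊆ Ψ ⁻¹' Iic (2 / 3) :=
    closure_minimal
      (by rintro _ ⟨x, hx, rfl⟩; exact (show Ψ (stoneCechUnit x) < 2 / 3 from hfΨ hx).le)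
      (isClosed_Iic.preimage Ψ.continuous)
  refine ⟨f, hf, Ψ ⁻¹' Iio (1 / 3), isOpen_Iio.preimage Ψ.continuous,
    fun p hp => by norm_num [hΨ0 hp], fun x hx => hΨf (le_of_lt hx : Ψ (stoneCechUnit x) ≤ 1 / 3),
    disjoint_of_subset_left hcl (disjoint_left.2 fun p hp hp₁ => ?_)⟩
  norm_num [hΨ1 hp₁] at hp

end AlmostNormallyMultiplicative

namespace PreservesCommonZeros

variable {X Y E F : Type*} [TopologicalSpace X] [TopologicalSpace Y] [AddCommGroup E]
  [Module ℝ E] [AddCommGroup F] [Module ℝ F] {AXE : Submodule ℝ (X → E)}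
  {AYF : Submodule ℝ (Y → F)} {T : AXE → AYF}

theorem nonempty_zeroSet_iff (hT : PreservesCommonZeros T) (f : AXE) :
    (zeroSet (f : X → E)).Nonempty ↔ (zeroSet (T f : Y → F)).Nonempty := by
  simpa only [iInter_const] using hT 0 fun _ => f

theorem disjoint_zeroSet_iff (hT : PreservesCommonZeros T) (f g : AXE) :
    Disjoint (zeroSet (f : X → E)) (zeroSet (g : X → E)) ↔
      Disjoint (zeroSet (T f : Y → F)) (zeroSet (T g : Y → F)) := by
  rw [← not_iff_not, not_disjoint_iff_nonempty_inter, not_disjoint_iff_nonempty_inter]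
  convert hT 1 ![f, g] using 2 <;> ext <;> simp [zeroSet, Fin.forall_fin_two]

theorem exists_forall_apply_eq_zero (hT : PreservesCommonZeros T) {s : Finset AXE} {x : X}
    (hx : ∀ f ∈ s, (f : X → E) x = 0) : ∃ y, ∀ f ∈ s, (T f : Y → F) y = 0 := by
  let fs : Fin (s.card + 1) → AXE := Fin.cons 0 fun i => s.equivFin.symm i
  obtain ⟨y, hy⟩ := (hT s.card fs).1
    ⟨x, mem_iInter.2 (Fin.cases (by simp [fs, zeroSet]) fun i => hx _ (s.equivFin.symm i).2)⟩
  refine ⟨y, fun f hf => ?_⟩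
  simpa [fs, zeroSet] using mem_iInter.1 hy (s.equivFin ⟨f, hf⟩).succ

theorem nonempty_Zx (hT : PreservesCommonZeros T) (x : X) : (Zx T x).Nonempty := by
  have := CompactSpace.iInter_nonempty
    (t := fun f : {f : AXE // (f : X → E) x = 0} =>
      closure (stoneCechUnit '' zeroSet (T f : Y → F)))
    (fun _ => isClosed_closure) fun s => ?_
  · simpa only [Zx, iInter_subtype] using this
  obtain ⟨y, hy⟩ := hT.exists_forall_apply_eq_zero (s := s.map (Function.Embedding.subtype _))
    (x := x) (by simp +contextual)
  exact ⟨stoneCechUnit y, mem_iInter₂.2 fun f hf =>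
    subset_closure ⟨y, hy f (Finset.mem_map_of_mem _ hf), rfl⟩⟩

end PreservesCommonZeros

section Transfer

variable {X Y E F : Type*} [TopologicalSpace X] [TopologicalSpace Y] [AddCommGroup E]
  [Module ℝ E] [AddCommGroup F] [Module ℝ F] [TopologicalSpace F]
  [CompletelyRegularSpace Y] [T1Space F] [Nontrivial F] {AXE : Submodule ℝ (X → E)}
  {AYF : Submodule ℝ (Y → F)} {T : AXE → AYF}

theorem exists_apply_eq_zero_disjoint_zeroSet (hAYF : AlmostNormallyMultiplicative Y F AYF)
    (hTsurj : Function.Surjective T) (hT : PreservesCommonZeros T) {h : AXE} {y : Y}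
    (hy : (T h : Y → F) y ≠ 0) :
    ∃ f : AXE, (T f : Y → F) y = 0 ∧ Disjoint (zeroSet (f : X → E)) (zeroSet (h : X → E)) := by
  obtain ⟨ρ, hρ, hρy, hρh⟩ := CompletelyRegularSpace.completely_regular y _
    (isClosed_zeroSet (hAYF.1 _ (T h).2)) hy
  obtain ⟨g, hg, hρg, hgρ⟩ := hAYF.exists_sublevel_subset_zeroSet_subset
    (continuous_subtype_val.comp hρ) (by norm_num : (1 : ℝ) / 3 < 2 / 3)
  obtain ⟨f, hf⟩ := hTsurj ⟨g, hg⟩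
  refine ⟨f, by rw [hf]; exact hρg (by norm_num [hρy]), (hT.disjoint_zeroSet_iff f h).2 ?_⟩
  rw [hf]
  refine disjoint_left.2 fun y' hy'g hy'h => ?_
  have := hgρ hy'g
  norm_num [hρh hy'h] at this

theorem zeroSet_subset_zeroSet (hAYF : AlmostNormallyMultiplicative Y F AYF)
    (hTsurj : Function.Surjective T) (hT : PreservesCommonZeros T) {f h : AXE}
    (hfh : zeroSet (f : X → E) ⊆ zeroSet (h : X → E)) :
    zeroSet (T f : Y → F) ⊆ zeroSet (T h : Y → F) := by
  intro y hyf
  by_contra hyh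
  obtain ⟨f₀, hf₀y, hf₀h⟩ := exists_apply_eq_zero_disjoint_zeroSet hAYF hTsurj hT hyh
  exact disjoint_left.1 ((hT.disjoint_zeroSet_iff f₀ f).1 (hf₀h.mono_right hfh)) hf₀y hyf

theorem compl_zeroSet_subset_zeroSet (hAYF : AlmostNormallyMultiplicative Y F AYF)
    (hTsurj : Function.Surjective T) (hT : PreservesCommonZeros T) {h h' : AXE}
    (hhh' : (zeroSet (h : X → E))ᶜ ⊆ zeroSet (h' : X → E)) :
    (zeroSet (T h : Y → F))ᶜ ⊆ zeroSet (T h' : Y → F) := by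
  intro y hy
  obtain ⟨f₀, hf₀y, hf₀h⟩ := exists_apply_eq_zero_disjoint_zeroSet hAYF hTsurj hT hy
  exact zeroSet_subset_zeroSet hAYF hTsurj hT
    ((subset_compl_iff_disjoint_right.2 hf₀h).trans hhh') hf₀y

/-- The Urysohn family is indexed by intervals of levels of `τ` rather than by levels: cuts of `τ`
between the ends of two intervals only nest when the intervals are disjoint. -/
theorem disjoint_closure_zeroSet_of_separated [TopologicalSpace E] [Nontrivial E]
    (hAXE : AlmostNormallyMultiplicative X E AXE) (hAYF : AlmostNormallyMultiplicative Y F AYF)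
    (hTsurj : Function.Surjective T) (hT : PreservesCommonZeros T) {f g : AXE} {τ : X → ℝ}
    (hτ : Continuous τ) {a b : ℝ} (hab : a < b) (hf : ∀ x ∈ zeroSet (f : X → E), τ x ≤ a)
    (hg : ∀ x ∈ zeroSet (g : X → E), b ≤ τ x) :
    Disjoint (closure (stoneCechUnit '' zeroSet (T f : Y → F)))
      (closure (stoneCechUnit '' zeroSet (T g : Y → F))) := by
  choose low hlow hlow_le hlow_lt using fun I : {I : ℝ × ℝ // I.1 < I.2} =>
    hAXE.exists_sublevel_subset_zeroSet_subset hτ I.2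
  choose high hhigh hhigh_ge hhigh_gt using fun I : {I : ℝ × ℝ // I.1 < I.2} =>
    hAXE.exists_superlevel_subset_zeroSet_subset hτ I.2
  let K I : Set Y := zeroSet (T ⟨low I, hlow I⟩ : Y → F)
  let V I : Set Y := (zeroSet (T ⟨high I, hhigh I⟩ : Y → F))ᶜ
  have hKV I J (hIJ : I.1.2 < J.1.1) : K I ⊆ V J :=
    subset_compl_iff_disjoint_right.2 <| (hT.disjoint_zeroSet_iff _ _).1 <|
      disjoint_left.2 fun x hxI hxJ =>
        lt_irrefl _ (((hhigh_gt J hxJ).trans (hlow_lt I hxI)).trans hIJ)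
  have hVK I J (hIJ : I.1.2 < J.1.1) : V I ⊆ K J :=
    compl_zeroSet_subset_zeroSet hAYF hTsurj hT fun x hx =>
      hlow_le J (le_of_lt (lt_of_not_ge fun hIx => hx (hhigh_ge I hIx)) |>.trans hIJ.le)
  have hdense (I J : {I : ℝ × ℝ // I.1 < I.2}) (hIJ : I.1.2 < J.1.1) :
      ∃ M : {I : ℝ × ℝ // I.1 < I.2}, I.1.2 < M.1.1 ∧ M.1.2 < J.1.1 :=
    ⟨⟨((2 * I.1.2 + J.1.1) / 3, (I.1.2 + 2 * J.1.1) / 3), by linarith⟩, by linarith,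
      by linarith⟩
  let I₀ : {I : ℝ × ℝ // I.1 < I.2} := ⟨(a, (2 * a + b) / 3), by linarith⟩
  let J₀ : {I : ℝ × ℝ // I.1 < I.2} := ⟨((a + 2 * b) / 3, b), by linarith⟩
  obtain ⟨ψ, hψ, hψ0, hψ1⟩ := exists_continuous_zero_one_of_interpolating hdense
    (fun I => isClosed_zeroSet (hAYF.1 _ (T _).2))
    (fun I => (isClosed_zeroSet (hAYF.1 _ (T _).2)).isOpen_compl) hKV hVK
    (i := I₀) (j := J₀) (by simp only [I₀, J₀]; linarith)
  have hfK : zeroSet (T f : Y → F) ⊆ K I₀ :=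
    zeroSet_subset_zeroSet hAYF hTsurj hT fun x hx => hlow_le I₀ (hf x hx)
  have hgV : zeroSet (T g : Y → F) ⊆ (V J₀)ᶜ := by
    rw [compl_compl]
    exact zeroSet_subset_zeroSet hAYF hTsurj hT fun x hx => hhigh_ge J₀ (hg x hx)
  exact disjoint_closure_image_stoneCechUnit hψ zero_lt_one
    (fun y hy => (hψ0 y (hfK hy)).le) fun y hy => (hψ1 y (hgV hy)).ge

end Transfer

section Zx

variable {X Y E F : Type*} [TopologicalSpace X] [TopologicalSpace Y] [AddCommGroup E]
  [Module ℝ E] [TopologicalSpace E] [AddCommGroup F] [Module ℝ F] [TopologicalSpace F]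
  [CompletelyRegularSpace X] [T1Space E] [Nontrivial E]
  [CompletelyRegularSpace Y] [T1Space F] [Nontrivial F]
  {AXE : Submodule ℝ (X → E)} {AYF : Submodule ℝ (Y → F)} {T : AXE → AYF}

theorem mem_closure_zeroSet_iff_of_mem_Zx (hAXE : AlmostNormallyMultiplicative X E AXE)
    (hAYF : AlmostNormallyMultiplicative Y F AYF) (hTsurj : Function.Surjective T)
    (hT : PreservesCommonZeros T) {x : X} {p : StoneCech Y} (hp : p ∈ Zx T x)
    (f : AXE) : p ∈ closure (stoneCechUnit '' zeroSet (T f : Y → F)) ↔ (f : X → E) x = 0 := by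
  refine ⟨fun hpf => ?_, fun hfx => mem_iInter₂.1 hp f hfx⟩
  by_contra hfx
  obtain ⟨ρ, hρ, hρx, hρf⟩ := CompletelyRegularSpace.completely_regular x _
    (isClosed_zeroSet (hAXE.1 _ f.2)) hfx
  have hρ' : Continuous fun x => (ρ x : ℝ) := continuous_subtype_val.comp hρ
  obtain ⟨f₀, hf₀, hρf₀, hf₀ρ⟩ := hAXE.exists_sublevel_subset_zeroSet_subset hρ'
    (by norm_num : (1 : ℝ) / 3 < 2 / 3)
  have hpf₀ := mem_iInter₂.1 hp ⟨f₀, hf₀⟩ (hρf₀ (by norm_num [hρx]))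
  refine disjoint_left.1 (disjoint_closure_zeroSet_of_separated hAXE hAYF hTsurj hT hρ'
    (by norm_num : (2 : ℝ) / 3 < 1) (fun x' hx' => le_of_lt (hf₀ρ hx')) fun x' hx' => ?_)
    hpf₀ hpf
  simp [hρf hx']

theorem apply_eq_zero_of_mem_Zx_of_isOpen (hAXE : AlmostNormallyMultiplicative X E AXE)
    (hAYF : AlmostNormallyMultiplicative Y F AYF) (hTsurj : Function.Surjective T)
    (hT : PreservesCommonZeros T) {x : X} {p : StoneCech Y} (hp : p ∈ Zx T x)
    {V : Set (StoneCech Y)} (hV : IsOpen V) (hpV : p ∈ V) {f : AXE}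
    (hf : ∀ y, stoneCechUnit y ∈ V → (T f : Y → F) y = 0) : (f : X → E) x = 0 := by
  refine (mem_closure_zeroSet_iff_of_mem_Zx hAXE hAYF hTsurj hT hp f).1
    (closure_mono ?_ (denseRange_stoneCechUnit.open_subset_closure_inter hV hpV))
  rintro _ ⟨hyV, y, rfl⟩
  exact ⟨y, hf y hyV, rfl⟩

theorem exists_separating_of_notMem (hAXE : AlmostNormallyMultiplicative X E AXE)
    (hAYF : AlmostNormallyMultiplicative Y F AYF)
    (hTsurj : Function.Surjective T) (hT : PreservesCommonZeros T) {p : StoneCech Y}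
    {K : Set (StoneCech Y)} (hK : IsClosed K) (hpK : p ∉ K) :
    ∃ f : AXE, (∀ x, p ∈ Zx T x → (f : X → E) x ≠ 0) ∧
      ∀ x, (Zx T x ∩ K).Nonempty → (f : X → E) x = 0 := by
  obtain ⟨g, hg, V, hV, hKV, hgV, hgp⟩ := hAYF.exists_eq_zero_near_disjoint_closure hK
    isClosed_singleton (disjoint_singleton_right.2 hpK)
  obtain ⟨f, hf⟩ := hTsurj ⟨g, hg⟩
  refine ⟨f, fun x hp hfx => ?_, fun x ⟨q, hq, hqK⟩ =>
    apply_eq_zero_of_mem_Zx_of_isOpen hAXE hAYF hTsurj hT hq hV (hKV hqK) (by rw [hf]; exact hgV)⟩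
  have := (mem_closure_zeroSet_iff_of_mem_Zx hAXE hAYF hTsurj hT hp f).2 hfx
  rw [hf] at this
  exact disjoint_right.1 hgp (mem_singleton p) this

variable {σ : X → StoneCech Y}

theorem continuous_of_mem_Zx (hAXE : AlmostNormallyMultiplicative X E AXE)
    (hAYF : AlmostNormallyMultiplicative Y F AYF) (hTsurj : Function.Surjective T)
    (hT : PreservesCommonZeros T) (hσ : ∀ x, σ x ∈ Zx T x) : Continuous σ := by
  refine continuous_def.2 fun U hU => isOpen_iff_forall_mem_open.2 fun x hx => ?_
  obtain ⟨f, hfσ, hf⟩ := exists_separating_of_notMem hAXE hAYF hTsurj hT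
    hU.isClosed_compl (not_not.2 hx)
  exact ⟨(zeroSet (f : X → E))ᶜ,
    fun x' hx' => not_not.1 fun hx'U => hx' (hf x' ⟨σ x', hσ x', hx'U⟩),
    (isClosed_zeroSet (hAXE.1 _ f.2)).isOpen_compl, hfσ x (hσ x)⟩

theorem isInducing_of_mem_Zx (hAXE : AlmostNormallyMultiplicative X E AXE)
    (hAYF : AlmostNormallyMultiplicative Y F AYF) (hTsurj : Function.Surjective T)
    (hT : PreservesCommonZeros T) (hσ : ∀ x, σ x ∈ Zx T x) : IsInducing σ := by
  refine isInducing_iff_nhds.2 fun x =>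
    le_antisymm ((continuous_of_mem_Zx hAXE hAYF hTsurj hT hσ).tendsto x).le_comap
      fun N hN => ?_
  obtain ⟨f, hf, hfx, hfN⟩ := hAXE.exists_apply_ne_zero_subset hN
  have hσf x' := mem_closure_zeroSet_iff_of_mem_Zx hAXE hAYF hTsurj hT (hσ x') ⟨f, hf⟩
  exact mem_comap.2 ⟨_, isClosed_closure.isOpen_compl.mem_nhds (mt (hσf x).1 hfx),
    fun x' hx' => hfN (mt (hσf x').2 hx')⟩

theorem denseRange_of_mem_Zx (hAXE : AlmostNormallyMultiplicative X E AXE)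
    (hAYF : AlmostNormallyMultiplicative Y F AYF) (hTsurj : Function.Surjective T)
    (hT : PreservesCommonZeros T) (hσ : ∀ x, σ x ∈ Zx T x) : DenseRange σ := by
  refine dense_iff_inter_open.2 fun U hU hUne => ?_
  obtain ⟨y, hy⟩ := denseRange_stoneCechUnit.exists_mem_open hU hUne
  obtain ⟨g, hg, V, hV, hyV, hgV, hgU⟩ := hAYF.exists_eq_zero_near_disjoint_closure
    isClosed_singleton hU.isClosed_compl (disjoint_singleton_left.2 (not_not.2 hy))
  obtain ⟨f, hf⟩ := hTsurj ⟨g, hg⟩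
  obtain ⟨x, hx⟩ := (hT.nonempty_zeroSet_iff f).2 ⟨y, by rw [hf]; exact hgV y (hyV rfl)⟩
  have := (mem_closure_zeroSet_iff_of_mem_Zx hAXE hAYF hTsurj hT (hσ x) f).2 hx
  rw [hf] at this
  exact ⟨σ x, not_not.1 (disjoint_left.1 hgU this), x, rfl⟩

end Zx

theorem mem_closure_eq_const_of_mem_Zx {X Y E F : Type*} [TopologicalSpace X]
    [TopologicalSpace Y] [AddCommGroup E] [Module ℝ E] [TopologicalSpace E] [AddCommGroup F]
    [Module ℝ F] {AXE : Submodule ℝ (X → E)} {AYF : Submodule ℝ (Y → F)} {T : AXE →ₗ[ℝ] AYF}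
    (hAXE : AlmostNormallyMultiplicative X E AXE) {x : X} {p : StoneCech Y}
    (hp : p ∈ Zx (T : AXE → AYF) x) (f : AXE) :
    p ∈ closure (stoneCechUnit '' {y | (T f : Y → F) y =
      (T ⟨fun _ => (f : X → E) x, hAXE.2.1 _⟩ : Y → F) y}) := by
  simpa only [zeroSet, map_sub, Submodule.coe_sub, Pi.sub_apply, sub_eq_zero] using
    mem_iInter₂.1 hp (f - ⟨fun _ => (f : X → E) x, hAXE.2.1 _⟩) (sub_self _)

theorem prop_Zx_general {X Y E F : Type*}
    [TopologicalSpace X] [T2Space X] [CompletelyRegularSpace X]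
    [TopologicalSpace Y] [CompletelyRegularSpace Y]
    [AddCommGroup E] [Module ℝ E] [TopologicalSpace E] [T2Space E] [Nontrivial E]
    [AddCommGroup F] [Module ℝ F] [TopologicalSpace F] [T2Space F] [Nontrivial F]
    {AXE : Submodule ℝ (X → E)} {AYF : Submodule ℝ (Y → F)}
    (hAXE : AlmostNormallyMultiplicative X E AXE)
    (hAYF : AlmostNormallyMultiplicative Y F AYF)
    (T : AXE →ₗ[ℝ] AYF) (hTsurj : Function.Surjective T)
    (hT : PreservesCommonZeros (T : AXE → AYF)) :
    ∃ (Z : Set (StoneCech Y)) (h : Z ≃ₜ X), Dense Z ∧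
      ∀ (y : Z) (f : AXE),
        (y : StoneCech Y) ∈ closure (stoneCechUnit ''
            {yα : Y | (T f : Y → F) yα =
              (T ⟨fun _ => (f : X → E) (h y), hAXE.2.1 _⟩ : Y → F) yα}) ∧
        betaExt (hAYF.1 _ (T f).2) (y : StoneCech Y) =
          betaExt (hAYF.1 _ (T ⟨fun _ => (f : X → E) (h y), hAXE.2.1 _⟩).2)
            (y : StoneCech Y) := by
  choose σ hσ using hT.nonempty_Zx
  have hσind := isInducing_of_mem_Zx hAXE hAYF hTsurj hT hσ
  let e := (IsEmbedding.mk hσind hσind.injective).toHomeomorph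
  refine ⟨range σ, e.symm, denseRange_of_mem_Zx hAXE hAYF hTsurj hT hσ, fun y f => ?_⟩
  have hy : σ (e.symm y) = y := congrArg Subtype.val (e.apply_symm_apply y)
  have hmem := mem_closure_eq_const_of_mem_Zx hAXE (hy ▸ hσ (e.symm y)) f
  exact ⟨hmem, betaExt_eq_of_mem_closure _ _ hmem⟩

theorem prop_Zx {X Y E F : Type*}
    [TopologicalSpace X] [T2Space X] [CompletelyRegularSpace X]
    [TopologicalSpace Y] [T2Space Y] [CompletelyRegularSpace Y]
    [AddCommGroup E] [Module ℝ E] [TopologicalSpace E] [IsTopologicalAddGroup E]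
    [ContinuousSMul ℝ E] [T2Space E] [Nontrivial E]
    [AddCommGroup F] [Module ℝ F] [TopologicalSpace F] [IsTopologicalAddGroup F]
    [ContinuousSMul ℝ F] [T2Space F] [Nontrivial F]
    {AXE : Submodule ℝ (X → E)} {AYF : Submodule ℝ (Y → F)}
    (hAXE : AlmostNormallyMultiplicative X E AXE)
    (hAYF : AlmostNormallyMultiplicative Y F AYF)
    (T : AXE →ₗ[ℝ] AYF) (hTsurj : Function.Surjective T)
    (hT : PreservesCommonZeros (T : AXE → AYF)) :
    ∃ (Z : Set (StoneCech Y)) (h : Z ≃ₜ X), Dense Z ∧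
      ∀ (y : Z) (f : AXE),
        (y : StoneCech Y) ∈ closure (stoneCechUnit ''
            {yα : Y | (T f : Y → F) yα =
              (T ⟨fun _ => (f : X → E) (h y), hAXE.2.1 _⟩ : Y → F) yα}) ∧
        betaExt (hAYF.1 _ (T f).2) (y : StoneCech Y) =
          betaExt (hAYF.1 _ (T ⟨fun _ => (f : X → E) (h y), hAXE.2.1 _⟩).2)
            (y : StoneCech Y) :=
  prop_Zx_general hAXE hAYF T hTsurj hT
end

section
/- Let X and Y be realcompact (completely regular Hausdorff) spaces and let E and F be nontrivial Hausdorff topological vector lattices. Suppose T : C(X,E) → C(Y,F) is a vector lattice isomorphism (a linear bijection with T(f ∨ g) = Tf ∨ Tg for all f, g, where C(X,E) and C(Y,F) carry the pointwise lattice order) such that Z(f) ≠ ∅ ⟺ Z(Tf) ≠ ∅ for every f ∈ C(X,E). Then there are a homeomorphism h : Y → X and, for each y ∈ Y, a vector lattice isomorphism S_y : E → F (a linear bijection with S_y(u ∨ v) = S_y(u) ∨ S_y(v)) such that Tf(y) = S_y(f(h(y))) for all f ∈ C(X,E) and all y ∈ Y. -/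
open Set Filter Topology

/-- A map `T` between `C(X,E)` and `C(Y,F)` preserves common zeros if for every `k ∈ ℕ` and
every finite family `f₁, …, f_k` in `C(X,E)`, the zero sets of the `fᵢ` have a common point
iff the zero sets of the `T fᵢ` do. -/
def PreservesCommonZerosC {X Y E F : Type*} [TopologicalSpace X] [TopologicalSpace Y]
    [TopologicalSpace E] [Zero E] [TopologicalSpace F] [Zero F]
    (T : C(X, E) → C(Y, F)) : Prop :=
  ∀ (k : ℕ) (f : Fin (k + 1) → C(X, E)),
    (⋂ i, {x | f i x = 0}).Nonempty ↔ (⋂ i, {y | T (f i) y = 0}).Nonempty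

/-- The unique continuous extension `ψ* : βY → ℝ ∪ {∞}` of `ψ ∈ C(Y)` with values in the
one-point compactification of `ℝ`. -/
noncomputable def onePointExt {Y : Type*} [TopologicalSpace Y] (ψ : C(Y, ℝ)) :
    StoneCech Y → OnePoint ℝ :=
  stoneCechExtend (OnePoint.continuous_coe.comp ψ.continuous)

/-- The Hewitt realcompactification `υY ⊆ βY`: the set of points of `βY` at which the
extension of every real-valued continuous function on `Y` takes a finite value. -/
def hewittRealcompactification (Y : Type*) [TopologicalSpace Y] : Set (StoneCech Y) :=
  {p | ∀ ψ : C(Y, ℝ), onePointExt ψ p ≠ OnePoint.infty}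

/-- A completely regular Hausdorff space is realcompact if the image of the canonical map
`ι_X : X → βX` is exactly the Hewitt realcompactification `υX`. -/
def Realcompact (X : Type*) [TopologicalSpace X] : Prop :=
  Set.range (stoneCechUnit : X → StoneCech X) = hewittRealcompactification X

/-!
Fix `y ∈ Y`. The zero sets `Z(f)` with `T f y = 0` are nonempty and closed under finite
intersections, since `Z(|f| ⊔ |g|) = Z(f) ∩ Z(g)` and `T` commutes with `|·|` and `⊔`; so their
closures in `βX` share a point `p`. Each `ψ ∈ C(X)` is bounded on one of these zero sets.
Otherwise take `u n = (|ψ| - n)⁺ • e` and a Urysohn series `ξ` vanishing at `y` and positive on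
every `Z(T (u n))`: then `f = T⁻¹ (ξ • T e)` has a zero `x`, so `|f| ⊔ |u n|` vanishes at `x` for
`n ≥ |ψ x|`, while its image `|ξ • T e| ⊔ |T (u n)|` vanishes nowhere. Hence `p ∈ υX = X`, and
this point `h y` satisfies `T f y = 0 ↔ f (h y) = 0`. The same construction for `T⁻¹` inverts
`h`, continuity follows because zero sets separate points from closed sets, and
`T f y = T (const (f (h y))) y` gives `S y u = T (const u) y`.
-/

lemma abs_sup_abs_eq_zero_iff {E : Type*} [Lattice E] [AddCommGroup E] [AddLeftMono E]
    {a b : E} : |a| ⊔ |b| = 0 ↔ a = 0 ∧ b = 0 := by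
  refine ⟨fun h => ?_, fun h => by simp [h]⟩
  have h' := h.le
  simp only [abs, sup_le_iff, neg_nonpos] at h'
  exact ⟨le_antisymm h'.1.1 h'.1.2, le_antisymm h'.2.1 h'.2.2⟩

lemma CompletelyRegularSpace.exists_eq_zero_pos_on_of_notMem {Y : Type*} [TopologicalSpace Y]
    [CompletelyRegularSpace Y] {A : ℕ → Set Y} (hA : ∀ n, IsClosed (A n)) {y : Y}
    (hy : ∀ n, y ∉ A n) : ∃ ξ : C(Y, ℝ), ξ y = 0 ∧ ∀ n, ∀ y' ∈ A n, 0 < ξ y' := by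
  choose φ hφ hφy hφA using fun n => completely_regular y (A n) (hA n) (hy n)
  have hbound (n : ℕ) (y' : Y) : ‖((1 : ℝ) / 2) ^ n * φ n y'‖ ≤ ((1 : ℝ) / 2) ^ n := by
    rw [Real.norm_of_nonneg (mul_nonneg (by positivity) (φ n y').2.1)]
    exact mul_le_of_le_one_right (by positivity) (φ n y').2.2
  refine ⟨⟨fun y' => ∑' n, ((1 : ℝ) / 2) ^ n * φ n y',
    continuous_tsum (fun n => by fun_prop) summable_geometric_two hbound⟩, by simp [hφy], ?_⟩
  intro n y' hy'
  exact (summable_geometric_two.of_norm_bounded (hbound · y')).tsum_pos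
    (fun i => mul_nonneg (by positivity) (φ i y').2.1) n (by simp [hφA n hy'])

lemma mem_of_stoneCechUnit_mem_closure_image {X : Type*} [TopologicalSpace X]
    [CompletelyRegularSpace X] {C : Set X} (hC : IsClosed C) {x : X}
    (hx : stoneCechUnit x ∈ closure (stoneCechUnit '' C)) : x ∈ C := by
  rwa [← hC.closure_eq, isInducing_stoneCechUnit.closure_eq_preimage_closure_image]

lemma onePointExt_ne_infty_of_mem_closure {X : Type*} [TopologicalSpace X] {ψ : C(X, ℝ)}
    {S : Set X} {s : ℝ} (hψ : ∀ x ∈ S, |ψ x| ≤ s) {p : StoneCech X}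
    (hp : p ∈ closure (stoneCechUnit '' S)) : onePointExt ψ p ≠ OnePoint.infty := by
  have hclosed : IsClosed (onePointExt ψ ⁻¹' ((↑) '' Icc (-s) s)) :=
    ((isCompact_Icc.image OnePoint.continuous_coe).isClosed).preimage
      (continuous_stoneCechExtend _)
  have hsub : stoneCechUnit '' S ⊆ onePointExt ψ ⁻¹' ((↑) '' Icc (-s) s) := by
    rintro _ ⟨x, hx, rfl⟩
    exact ⟨ψ x, abs_le.mp (hψ x hx),
      (stoneCechExtend_stoneCechUnit (OnePoint.continuous_coe.comp ψ.continuous) x).symm⟩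
  obtain ⟨r, -, hr⟩ := closure_minimal hsub hclosed hp
  exact hr ▸ OnePoint.coe_ne_infty r

namespace ContinuousMap

@[simps]
def constₗ (R : Type*) {α M : Type*} [Semiring R] [TopologicalSpace α] [TopologicalSpace M]
    [AddCommMonoid M] [ContinuousAdd M] [Module R M] [ContinuousConstSMul R M] :
    M →ₗ[R] C(α, M) where
  toFun := const α
  map_add' _ _ := rfl
  map_smul' _ _ := rfl

end ContinuousMap

section VectorValued

variable {X E : Type*} [TopologicalSpace X] [CompletelyRegularSpace X]
  [TopologicalSpace E] [AddCommGroup E] [Module ℝ E] [ContinuousSMul ℝ E]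

lemma exists_continuousMap_apply_eq_eqOn_zero {C : Set X} (hC : IsClosed C) {x : X} (hx : x ∉ C)
    (e : E) : ∃ f : C(X, E), f x = e ∧ EqOn f 0 C := by
  obtain ⟨φ, hφ, hφx, hφC⟩ := CompletelyRegularSpace.completely_regular x C hC hx
  refine ⟨⟨fun x' => (1 - (φ x' : ℝ)) • e, by fun_prop⟩, by simp [hφx], fun x' hx' => ?_⟩
  simp [hφC hx']

lemma eq_of_forall_apply_eq_zero_imp [T1Space X] [Nontrivial E] {x₁ x₂ : X}
    (h : ∀ f : C(X, E), f x₁ = 0 → f x₂ = 0) : x₂ = x₁ := by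
  by_contra hne
  obtain ⟨e, he⟩ := exists_ne (0 : E)
  obtain ⟨f, hfx, hf⟩ := exists_continuousMap_apply_eq_eqOn_zero (isClosed_singleton (x := x₁))
    (mem_singleton_iff.not.mpr hne) e
  exact he (hfx ▸ h f (hf rfl))

lemma continuous_of_map_apply_eq_zero_iff [Nontrivial E] {Y F : Type*} [TopologicalSpace Y]
    [TopologicalSpace F] [Zero F] [T1Space F] {T : C(X, E) → C(Y, F)} {H : Y → X}
    (hH : ∀ f y, T f y = 0 ↔ f (H y) = 0) : Continuous H := by
  refine continuous_def.mpr fun V hV => isOpen_iff_forall_mem_open.mpr fun y hy => ?_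
  obtain ⟨e, he⟩ := exists_ne (0 : E)
  obtain ⟨f, hfx, hf⟩ :=
    exists_continuousMap_apply_eq_eqOn_zero hV.isClosed_compl (not_not_intro hy) e
  refine ⟨{y' | T f y' ≠ 0}, fun y' hy' => ?_,
    (isClosed_singleton.preimage (T f).continuous).isOpen_compl, by simpa [hH, hfx] using he⟩
  by_contra hy'V
  exact hy' ((hH f y').mpr (hf hy'V))

end VectorValued

section Representation

variable {X Y R E F : Type*} [TopologicalSpace X] [TopologicalSpace Y] [Semiring R]
  [TopologicalSpace E] [AddCommGroup E] [IsTopologicalAddGroup E] [Module R E]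
  [ContinuousConstSMul R E]
  [TopologicalSpace F] [AddCommGroup F] [IsTopologicalAddGroup F] [Module R F]
  [ContinuousConstSMul R F]

lemma map_apply_eq_map_const_apply {G : Type*} [FunLike G C(X, E) C(Y, F)]
    [AddMonoidHomClass G C(X, E) C(Y, F)] (T : G) {h : Y → X}
    (hh : ∀ f y, T f y = 0 ↔ f (h y) = 0) (f : C(X, E)) (y : Y) :
    T f y = T (.const X (f (h y))) y :=
  sub_eq_zero.mp <| by simpa using (hh (f - .const X (f (h y))) y).mpr (by simp)

lemma bijective_evalCLM_comp_constₗ (T : C(X, E) ≃ₗ[R] C(Y, F)) {h : Y → X}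
    (hh : ∀ f y, T f y = 0 ↔ f (h y) = 0) (y : Y) :
    Function.Bijective
      ((ContinuousMap.evalCLM R y).toLinearMap ∘ₗ T.toLinearMap ∘ₗ ContinuousMap.constₗ R) := by
  refine ⟨(injective_iff_map_eq_zero _).mpr fun u hu => by simpa using (hh _ y).mp hu,
    fun v => ⟨T.symm (.const Y v) (h y), ?_⟩⟩
  simp [← map_apply_eq_map_const_apply T hh]

end Representation

section LatticeIsomorphism

variable {X Y E F : Type*} [TopologicalSpace X] [TopologicalSpace Y]
  [Lattice E] [AddCommGroup E] [TopologicalSpace E] [IsTopologicalAddGroup E] [TopologicalLattice E]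
  [Lattice F] [AddCommGroup F] [TopologicalSpace F] [IsTopologicalAddGroup F] [TopologicalLattice F]

lemma ContinuousMap.abs_sup_abs_apply_eq_zero_iff [AddLeftMono E] (f g : C(X, E)) (x : X) :
    (|f| ⊔ |g|) x = 0 ↔ f x = 0 ∧ g x = 0 :=
  abs_sup_abs_eq_zero_iff

variable (T : C(X, E) ≃+ C(Y, F))

lemma map_abs_sup_abs (hT : ∀ f g, T (f ⊔ g) = T f ⊔ T g) (f g : C(X, E)) :
    T (|f| ⊔ |g|) = |T f| ⊔ |T g| := by
  simp only [abs, hT, map_neg]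

variable [Module ℝ E] [ContinuousSMul ℝ E] [Module ℝ F] [ContinuousSMul ℝ F]
  [AddLeftMono E] [AddLeftMono F] [Nontrivial E]

lemma exists_map_apply_eq_zero_abs_le [CompletelyRegularSpace Y] [T1Space F]
    (hT : ∀ f g, T (f ⊔ g) = T f ⊔ T g)
    (hTz : ∀ f, {x | f x = 0}.Nonempty ↔ {y | T f y = 0}.Nonempty) (y : Y) (ψ : C(X, ℝ)) :
    ∃ f : C(X, E), T f y = 0 ∧ ∃ s, ∀ x, f x = 0 → |ψ x| ≤ s := by
  by_contra! hunbdd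
  obtain ⟨e, he⟩ := exists_ne (0 : E)
  let u (n : ℕ) : C(X, E) := ((|ψ| - .const X (n : ℝ)) ⊔ 0 : C(X, ℝ)) • .const X e
  have hu (n : ℕ) (x : X) : u n x = 0 ↔ |ψ x| ≤ n := by
    simp [u, ContinuousMap.smul_apply', he]
  have huy (n : ℕ) : y ∉ {y' | T (u n) y' = 0} := fun hn => by
    obtain ⟨x, hx, hlt⟩ := hunbdd (u n) hn n
    exact hlt.not_ge ((hu n x).mp hx)
  obtain ⟨ξ, hξy, hξpos⟩ := CompletelyRegularSpace.exists_eq_zero_pos_on_of_notMem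
    (fun n => isClosed_singleton.preimage (T (u n)).continuous) huy
  have hTe (y' : Y) : T (.const X e) y' ≠ 0 := fun h => by
    obtain ⟨x, hx⟩ := (hTz _).mpr ⟨y', h⟩
    exact he hx
  set f := T.symm (ξ • T (.const X e))
  obtain ⟨x, hx⟩ : {x | f x = 0}.Nonempty :=
    (hTz f).mpr ⟨y, by simp [f, ContinuousMap.smul_apply', hξy]⟩
  obtain ⟨y', hy' : T (|f| ⊔ |u ⌈|ψ x|⌉₊|) y' = 0⟩ := (hTz _).mp
    ⟨x, (ContinuousMap.abs_sup_abs_apply_eq_zero_iff _ _ x).mpr ⟨hx, (hu _ x).mpr (Nat.le_ceil _)⟩⟩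
  rw [map_abs_sup_abs T hT, ContinuousMap.abs_sup_abs_apply_eq_zero_iff,
    AddEquiv.apply_symm_apply, ContinuousMap.smul_apply', smul_eq_zero] at hy'
  exact hy'.1.elim (hξpos _ y' hy'.2).ne' (hTe y')

lemma exists_forall_apply_eq_zero_of_map_apply_eq_zero [CompletelyRegularSpace X]
    [CompletelyRegularSpace Y] [T1Space E] [T1Space F] (hX : Realcompact X)
    (hT : ∀ f g, T (f ⊔ g) = T f ⊔ T g)
    (hTz : ∀ f, {x | f x = 0}.Nonempty ↔ {y | T f y = 0}.Nonempty) (y : Y) :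
    ∃ x, ∀ f, T f y = 0 → f x = 0 := by
  let K (f : {f : C(X, E) // T f y = 0}) : Set (StoneCech X) :=
    closure (stoneCechUnit '' {x | f.1 x = 0})
  have hdir : Directed (· ⊇ ·) K := fun f g =>
    ⟨⟨|f.1| ⊔ |g.1|, by simp [map_abs_sup_abs T hT, f.2, g.2]⟩,
      closure_mono (image_mono fun x hx => ((f.1.abs_sup_abs_apply_eq_zero_iff g.1 x).mp hx).1),
      closure_mono (image_mono fun x hx => ((f.1.abs_sup_abs_apply_eq_zero_iff g.1 x).mp hx).2)⟩
  have hne (f : {f : C(X, E) // T f y = 0}) : (K f).Nonempty :=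
    (((hTz f.1).mpr ⟨y, f.2⟩).image _).mono subset_closure
  have : Nonempty {f : C(X, E) // T f y = 0} := ⟨⟨0, by simp⟩⟩
  obtain ⟨p, hp⟩ := IsCompact.nonempty_iInter_of_directed_nonempty_isCompact_isClosed K hdir hne
    (fun _ => isClosed_closure.isCompact) (fun _ => isClosed_closure)
  rw [mem_iInter] at hp
  have hpυ : p ∈ hewittRealcompactification X := fun ψ => by
    obtain ⟨f, hf, s, hs⟩ := exists_map_apply_eq_zero_abs_le T hT hTz y ψ
    exact onePointExt_ne_infty_of_mem_closure hs (hp ⟨f, hf⟩)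
  obtain ⟨x, rfl⟩ : p ∈ range stoneCechUnit := hX ▸ hpυ
  exact ⟨x, fun f hf => mem_of_stoneCechUnit_mem_closure_image
    (isClosed_singleton.preimage f.continuous) (hp ⟨f, hf⟩)⟩

lemma exists_homeomorph_map_apply_eq_zero_iff [CompletelyRegularSpace X] [T1Space X]
    [CompletelyRegularSpace Y] [T1Space Y] [T1Space E] [T1Space F] [Nontrivial F]
    (hX : Realcompact X) (hY : Realcompact Y) (hT : ∀ f g, T (f ⊔ g) = T f ⊔ T g)
    (hTz : ∀ f, {x | f x = 0}.Nonempty ↔ {y | T f y = 0}.Nonempty) :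
    ∃ h : Y ≃ₜ X, ∀ f y, T f y = 0 ↔ f (h y) = 0 := by
  have hT' (g g' : C(Y, F)) : T.symm (g ⊔ g') = T.symm g ⊔ T.symm g' :=
    T.injective (by simp [hT])
  have hTz' (g : C(Y, F)) : {y | g y = 0}.Nonempty ↔ {x | T.symm g x = 0}.Nonempty := by
    simpa using (hTz (T.symm g)).symm
  choose H hH using exists_forall_apply_eq_zero_of_map_apply_eq_zero T hX hT hTz
  choose G hG using exists_forall_apply_eq_zero_of_map_apply_eq_zero T.symm hY hT' hTz'
  have hGH (y : Y) : G (H y) = y :=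
    eq_of_forall_apply_eq_zero_imp fun g hg => hG _ g (hH y _ (by simpa using hg))
  have hHG (x : X) : H (G x) = x :=
    eq_of_forall_apply_eq_zero_imp fun f hf => hH _ f (hG x _ (by simpa using hf))
  have hiff (f : C(X, E)) (y : Y) : T f y = 0 ↔ f (H y) = 0 :=
    ⟨hH y f, fun hf => hGH y ▸ hG _ (T f) (by simpa using hf)⟩
  refine ⟨⟨⟨H, G, hGH, hHG⟩, continuous_of_map_apply_eq_zero_iff hiff,
    continuous_of_map_apply_eq_zero_iff (T := T.symm) fun g x => ?_⟩, hiff⟩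
  simpa [hHG] using (hiff (T.symm g) (G x)).symm

end LatticeIsomorphism

theorem lattice_version_general {X Y E F : Type*}
    [TopologicalSpace X] [T2Space X] [CompletelyRegularSpace X]
    [TopologicalSpace Y] [T2Space Y] [CompletelyRegularSpace Y]
    (hX : Realcompact X) (hY : Realcompact Y)
    [Lattice E] [AddCommGroup E] [Module ℝ E]
    [CovariantClass E E (· + ·) (· ≤ ·)]
    [TopologicalSpace E] [IsTopologicalAddGroup E] [ContinuousSMul ℝ E]
    [TopologicalLattice E] [T2Space E] [Nontrivial E]
    [Lattice F] [AddCommGroup F] [Module ℝ F]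
    [CovariantClass F F (· + ·) (· ≤ ·)]
    [TopologicalSpace F] [IsTopologicalAddGroup F] [ContinuousSMul ℝ F]
    [TopologicalLattice F] [T2Space F] [Nontrivial F]
    (T : C(X, E) ≃ₗ[ℝ] C(Y, F))
    (hTlat : ∀ f g : C(X, E), T (f ⊔ g) = T f ⊔ T g)
    (hTz : ∀ f : C(X, E), {x | f x = 0}.Nonempty ↔ {y | T f y = 0}.Nonempty) :
    ∃ (h : Y ≃ₜ X) (S : Y → (E ≃ₗ[ℝ] F)),
      (∀ (y : Y) (u v : E), S y (u ⊔ v) = S y u ⊔ S y v) ∧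
      ∀ (f : C(X, E)) (y : Y), T f y = S y (f (h y)) := by
  obtain ⟨h, hh⟩ := exists_homeomorph_map_apply_eq_zero_iff T.toAddEquiv hX hY hTlat hTz
  refine ⟨h, fun y => .ofBijective _ (bijective_evalCLM_comp_constₗ T hh y), fun y u v => ?_,
    map_apply_eq_map_const_apply T hh⟩
  change T (.const X u ⊔ .const X v) y = _
  rw [hTlat]
  rfl

theorem lattice_version {X Y E F : Type*}
    [TopologicalSpace X] [T2Space X] [CompletelyRegularSpace X]
    [TopologicalSpace Y] [T2Space Y] [CompletelyRegularSpace Y]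
    (hX : Realcompact X) (hY : Realcompact Y)
    [Lattice E] [AddCommGroup E] [Module ℝ E]
    [CovariantClass E E (· + ·) (· ≤ ·)] [PosSMulMono ℝ E]
    [TopologicalSpace E] [IsTopologicalAddGroup E] [ContinuousSMul ℝ E]
    [TopologicalLattice E] [T2Space E] [Nontrivial E]
    [Lattice F] [AddCommGroup F] [Module ℝ F]
    [CovariantClass F F (· + ·) (· ≤ ·)] [PosSMulMono ℝ F]
    [TopologicalSpace F] [IsTopologicalAddGroup F] [ContinuousSMul ℝ F]
    [TopologicalLattice F] [T2Space F] [Nontrivial F]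
    (T : C(X, E) ≃ₗ[ℝ] C(Y, F))
    (hTlat : ∀ f g : C(X, E), T (f ⊔ g) = T f ⊔ T g)
    (hTz : ∀ f : C(X, E), {x | f x = 0}.Nonempty ↔ {y | T f y = 0}.Nonempty) :
    ∃ (h : Y ≃ₜ X) (S : Y → (E ≃ₗ[ℝ] F)),
      (∀ (y : Y) (u v : E), S y (u ⊔ v) = S y u ⊔ S y v) ∧
      ∀ (f : C(X, E)) (y : Y), T f y = S y (f (h y)) :=
  lattice_version_general hX hY T hTlat hTz
end
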